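/- Let n ≥ 1, m ∈ ℝ, r' > 0, and let p : ℤⁿ → ℂ be a symbol of order m. If there exists a constant K' > 0 such that |p(ξ)| ≤ K'·|ξ|^(m−r') for infinitely many ξ ∈ ℤⁿ \ {0}, then p(D) is not GH-r for any r with 0 ≤ r < r'. -/

import Mathlib

open scoped BigOperators

/-- `|ξ| = Σⱼ |ξⱼ|`. -/
noncomputable def l1norm {n : ℕ} (ξ : Fin n → ℤ) : ℝ := ∑ j, |(ξ j : ℝ)|

/-- `‖ξ‖² = Σⱼ ξⱼ²`. -/
noncomputable def l2normSq {n : ℕ} (ξ : Fin n → ℤ) : ℝ := ∑ j, ((ξ j : ℝ)) ^ 2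

/-- `u ∈ H^k(𝕋ⁿ)` in terms of its Fourier coefficients. -/
def InSobolev {n : ℕ} (k : ℝ) (u : (Fin n → ℤ) → ℂ) : Prop :=
  Summable fun ξ : Fin n → ℤ => (1 + l2normSq ξ) ^ k * ‖u ξ‖ ^ 2

/-- Polynomial growth of Fourier coefficients (a distribution on `𝕋ⁿ`). -/
def PolyGrowth {n : ℕ} (u : (Fin n → ℤ) → ℂ) : Prop :=
  ∃ C N : ℝ, 0 < C ∧ 0 < N ∧
    ∀ ξ, ‖u ξ‖ ≤ C * (1 + Real.sqrt (l2normSq ξ)) ^ N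

/-- Rapidly decreasing Fourier coefficients (a smooth function on `𝕋ⁿ`). -/
def RapidDecay {n : ℕ} (v : (Fin n → ℤ) → ℂ) : Prop :=
  ∀ N : ℝ, 0 < N → ∃ C : ℝ, 0 < C ∧
    ∀ ξ, ‖v ξ‖ ≤ C * (1 + Real.sqrt (l2normSq ξ)) ^ (-N)

/-- `p` is a symbol of order `m`. -/
def SymbolOrder {n : ℕ} (m : ℝ) (p : (Fin n → ℤ) → ℂ) : Prop :=
  ∃ C : ℝ, 0 < C ∧ ∀ ξ, ‖p ξ‖ ≤ C * (1 + l2normSq ξ) ^ (m / 2)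

/-- `p(D)` is globally hypoelliptic with loss of `r` derivatives (GH-`r`). -/
def GHr {n : ℕ} (m r : ℝ) (p : (Fin n → ℤ) → ℂ) : Prop :=
  ∀ (k : ℝ) (u : (Fin n → ℤ) → ℂ), PolyGrowth u →
    InSobolev k (fun ξ => p ξ * u ξ) → InSobolev (k + m - r) u

/-- `p(D)` is globally solvable with loss of `r` derivatives (GS-`r`). -/
def GSr {n : ℕ} (m r : ℝ) (p : (Fin n → ℤ) → ℂ) : Prop :=
  ∀ (k : ℝ) (f : (Fin n → ℤ) → ℂ), InSobolev k f → (∀ ξ, p ξ = 0 → f ξ = 0) →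
    ∃ u : (Fin n → ℤ) → ℂ, InSobolev (k + m - r) u ∧ ∀ ξ, p ξ * u ξ = f ξ

/-- `p(D)` is globally hypoelliptic (GH). -/
def GloballyHypoelliptic {n : ℕ} (p : (Fin n → ℤ) → ℂ) : Prop :=
  ∀ u : (Fin n → ℤ) → ℂ, PolyGrowth u →
    RapidDecay (fun ξ => p ξ * u ξ) → RapidDecay u


/-!
Write `⟨ξ⟩ = (1 + ‖ξ‖²)^(1/2)`. Among the infinitely many frequencies where
`‖p ξ‖ ≲ |ξ|^(m - r')`, choose a sequence `ξⱼ` so sparse that `∑ⱼ ‖p ξⱼ‖² ⟨ξⱼ⟩^(2(r - m))`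
converges; this is possible because on that set `‖p ξ‖² ⟨ξ⟩^(2(r - m)) ≲ ⟨ξ⟩^(-2(r' - r)) → 0`.
The distribution `u` with coefficients `⟨ξⱼ⟩^(r - m)` at the `ξⱼ` and `0` elsewhere then has
`p(D) u ∈ L²`, while every term of the `H^(m - r)` norm of `u` along the sequence equals `1`,
so `u ∉ H^(m - r)`.
-/

open Filter Topology

theorem Set.Infinite.exists_injective_summable_comp {α E : Type*} [NormedAddCommGroup E]
    [CompleteSpace E] {S : Set α} (hS : S.Infinite) {f : α → E}
    (hf : Tendsto f cofinite (𝓝 0)) :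
    ∃ e : ℕ → α, Function.Injective e ∧ (∀ j, e j ∈ S) ∧ Summable (f ∘ e) := by
  set s : ℕ → α := fun j => hS.natEmbedding S j
  have hs : Function.Injective s := Subtype.val_injective.comp (hS.natEmbedding S).injective
  have hfs : Tendsto (f ∘ s) atTop (𝓝 0) := Nat.cofinite_eq_atTop ▸ hf.comp hs.tendsto_cofinite
  obtain ⟨φ, hφ, hφs⟩ := hfs.subseq_mem (V := fun j => Metric.closedBall 0 ((1 / 2) ^ j))
    fun j => Metric.closedBall_mem_nhds _ (by positivity)
  refine ⟨s ∘ φ, hs.comp hφ.injective, fun j => (hS.natEmbedding S (φ j)).2,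
    Summable.of_norm_bounded summable_geometric_two fun j => ?_⟩
  simpa using hφs j

theorem Real.rpow_le_rpow_abs_mul_rpow {x y c : ℝ} (hx : 0 < x) (hc : 1 ≤ c)
    (hyx : y ≤ c * x) (hxy : x ≤ c * y) (e : ℝ) : y ^ e ≤ c ^ |e| * x ^ e := by
  have hc0 : 0 < c := one_pos.trans_le hc
  rcases le_or_gt 0 e with he | he
  · rw [abs_of_nonneg he, ← Real.mul_rpow hc0.le hx.le]
    exact Real.rpow_le_rpow (by nlinarith) hyx he
  · have hxcy : x / c ≤ y := (div_le_iff₀' hc0).mpr hxy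
    calc y ^ e ≤ (x / c) ^ e := Real.rpow_le_rpow_of_nonpos (by positivity) hxcy he.le
      _ = c ^ |e| * x ^ e := by
        rw [Real.div_rpow hx.le hc0.le, abs_of_neg he, Real.rpow_neg hc0.le]
        ring

theorem Real.rpow_le_rpow_of_le_sq {b x s t : ℝ} (hb : 1 ≤ b) (hx : 1 ≤ x) (hxb : x ≤ b ^ 2)
    (hst : 2 * |s| ≤ t) : x ^ s ≤ b ^ t := by
  rcases le_or_gt 0 s with hs | hs
  · calc x ^ s ≤ (b ^ 2) ^ s := Real.rpow_le_rpow (by linarith) hxb hs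
      _ = b ^ (2 * s) := by
        rw [← Real.rpow_natCast, ← Real.rpow_mul (by linarith)]
        norm_num
      _ ≤ b ^ t := Real.rpow_le_rpow_of_exponent_le hb (by linarith [le_abs_self s])
  · calc x ^ s ≤ 1 := Real.rpow_le_one_of_one_le_of_nonpos hx hs.le
      _ ≤ b ^ t := Real.one_le_rpow hb (by linarith [abs_nonneg s])

section Lattice

variable {n : ℕ}

theorem l2normSq_nonneg (ξ : Fin n → ℤ) : 0 ≤ l2normSq ξ :=
  Finset.sum_nonneg fun _ _ => sq_nonneg _

theorem l1norm_nonneg (ξ : Fin n → ℤ) : 0 ≤ l1norm ξ :=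
  Finset.sum_nonneg fun _ _ => abs_nonneg _

theorem one_add_l2normSq_pos (ξ : Fin n → ℤ) : 0 < 1 + l2normSq ξ := by
  linarith [l2normSq_nonneg ξ]

theorem sq_le_l2normSq (ξ : Fin n → ℤ) (j : Fin n) : (ξ j : ℝ) ^ 2 ≤ l2normSq ξ :=
  Finset.single_le_sum (f := fun i => (ξ i : ℝ) ^ 2) (fun _ _ => sq_nonneg _)
    (Finset.mem_univ j)

theorem one_le_l2normSq {ξ : Fin n → ℤ} (hξ : ξ ≠ 0) : 1 ≤ l2normSq ξ := by
  obtain ⟨j, hj⟩ := Function.ne_iff.mp hξ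
  have h1 : (1 : ℝ) ≤ |(ξ j : ℝ)| := by exact_mod_cast Int.one_le_abs hj
  nlinarith [sq_le_l2normSq ξ j, sq_abs (ξ j : ℝ)]

theorem l2normSq_le_l1norm_sq (ξ : Fin n → ℤ) : l2normSq ξ ≤ l1norm ξ ^ 2 := by
  simpa [l1norm, l2normSq, sq_abs] using
    Finset.sum_sq_le_sq_sum_of_nonneg (s := Finset.univ) (f := fun j => |(ξ j : ℝ)|)
      fun _ _ => abs_nonneg _

theorem l1norm_sq_le (ξ : Fin n → ℤ) : l1norm ξ ^ 2 ≤ n * l2normSq ξ := by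
  simpa [l1norm, l2normSq, sq_abs] using
    sq_sum_le_card_mul_sum_sq (s := Finset.univ) (f := fun j => |(ξ j : ℝ)|)

theorem norm_le_l2normSq (ξ : Fin n → ℤ) : ‖ξ‖ ≤ l2normSq ξ := by
  refine (pi_norm_le_iff_of_nonneg (l2normSq_nonneg ξ)).mpr fun j => ?_
  have h : |ξ j| ≤ ξ j ^ 2 := Int.natCast_natAbs (ξ j) ▸ Int.natAbs_le_self_sq (ξ j)
  rw [Int.norm_eq_abs]
  exact (by exact_mod_cast h : |(ξ j : ℝ)| ≤ (ξ j : ℝ) ^ 2).trans (sq_le_l2normSq ξ j)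

theorem tendsto_l2normSq_cofinite : Tendsto (l2normSq (n := n)) cofinite atTop :=
  tendsto_atTop_mono norm_le_l2normSq <|
    cocompact_eq_cofinite (Fin n → ℤ) ▸ tendsto_norm_cocompact_atTop

theorem l1norm_rpow_sq_le {ξ : Fin n → ℤ} (hξ : ξ ≠ 0) (a : ℝ) :
    (l1norm ξ ^ a) ^ 2 ≤ ((n : ℝ) + 2) ^ |a| * (1 + l2normSq ξ) ^ a := by
  have hL := one_le_l2normSq hξ
  have hLA := l2normSq_le_l1norm_sq ξ
  have hAL := l1norm_sq_le ξ
  have hn : (0 : ℝ) ≤ n := n.cast_nonneg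
  rw [Real.rpow_pow_comm (l1norm_nonneg ξ)]
  exact Real.rpow_le_rpow_abs_mul_rpow (by linarith) (by linarith) (by nlinarith) (by nlinarith) a

theorem norm_sq_mul_rpow_le {p : (Fin n → ℤ) → ℂ} {K a : ℝ} {ξ : Fin n → ℤ} (hξ : ξ ≠ 0)
    (hp : ‖p ξ‖ ≤ K * l1norm ξ ^ a) (b : ℝ) :
    ‖p ξ‖ ^ 2 * (1 + l2normSq ξ) ^ b
      ≤ K ^ 2 * ((n : ℝ) + 2) ^ |a| * (1 + l2normSq ξ) ^ (a + b) := by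
  have hsq : ‖p ξ‖ ^ 2 ≤ K ^ 2 * (((n : ℝ) + 2) ^ |a| * (1 + l2normSq ξ) ^ a) :=
    calc ‖p ξ‖ ^ 2 ≤ (K * l1norm ξ ^ a) ^ 2 := pow_le_pow_left₀ (norm_nonneg _) hp 2
      _ = K ^ 2 * (l1norm ξ ^ a) ^ 2 := mul_pow _ _ _
      _ ≤ _ := mul_le_mul_of_nonneg_left (l1norm_rpow_sq_le hξ a) (sq_nonneg K)
  calc ‖p ξ‖ ^ 2 * (1 + l2normSq ξ) ^ b
      ≤ K ^ 2 * (((n : ℝ) + 2) ^ |a| * (1 + l2normSq ξ) ^ a) * (1 + l2normSq ξ) ^ b :=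
        mul_le_mul_of_nonneg_right hsq (Real.rpow_nonneg (one_add_l2normSq_pos ξ).le b)
    _ = _ := by rw [Real.rpow_add (one_add_l2normSq_pos ξ)]; ring

end Lattice

section Counterexample

variable {n : ℕ}

noncomputable def weightOn (S : Set (Fin n → ℤ)) (s : ℝ) : (Fin n → ℤ) → ℂ :=
  S.indicator fun ξ => (((1 + l2normSq ξ) ^ s : ℝ) : ℂ)

theorem norm_weightOn_of_mem {S : Set (Fin n → ℤ)} {ξ : Fin n → ℤ} (hξ : ξ ∈ S) (s : ℝ) :
    ‖weightOn S s ξ‖ = (1 + l2normSq ξ) ^ s := by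
  rw [weightOn, Set.indicator_of_mem hξ, Complex.norm_real, Real.norm_eq_abs,
    abs_of_nonneg (Real.rpow_nonneg (one_add_l2normSq_pos ξ).le s)]

theorem weightOn_of_notMem {S : Set (Fin n → ℤ)} {ξ : Fin n → ℤ} (hξ : ξ ∉ S) (s : ℝ) :
    weightOn S s ξ = 0 :=
  Set.indicator_of_notMem hξ _

theorem norm_weightOn_sq_of_mem {S : Set (Fin n → ℤ)} {ξ : Fin n → ℤ} (hξ : ξ ∈ S) (s : ℝ) :
    ‖weightOn S s ξ‖ ^ 2 = (1 + l2normSq ξ) ^ (2 * s) := by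
  rw [norm_weightOn_of_mem hξ, ← Real.rpow_natCast, ← Real.rpow_mul (one_add_l2normSq_pos ξ).le,
    mul_comm]
  norm_num

theorem polyGrowth_weightOn (S : Set (Fin n → ℤ)) (s : ℝ) : PolyGrowth (weightOn S s) := by
  refine ⟨1, 2 * |s| + 1, one_pos, by positivity, fun ξ => ?_⟩
  have hL := l2normSq_nonneg ξ
  have hb : 1 ≤ 1 + Real.sqrt (l2normSq ξ) := by linarith [Real.sqrt_nonneg (l2normSq ξ)]
  rw [one_mul]
  by_cases hξ : ξ ∈ S
  · rw [norm_weightOn_of_mem hξ]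
    refine Real.rpow_le_rpow_of_le_sq hb (by linarith) ?_ (by linarith)
    nlinarith [Real.sqrt_nonneg (l2normSq ξ), Real.sq_sqrt hL]
  · rw [weightOn_of_notMem hξ, norm_zero]
    positivity

theorem not_inSobolev_weightOn {S : Set (Fin n → ℤ)} (hS : S.Infinite) (s : ℝ) :
    ¬ InSobolev (-(2 * s)) (weightOn S s) := by
  intro h
  have hone : Summable fun _ : S => (1 : ℝ) := by
    refine (h.comp_injective Subtype.val_injective).congr fun ξ => ?_
    rw [Function.comp_apply, norm_weightOn_sq_of_mem ξ.2,
      ← Real.rpow_add (one_add_l2normSq_pos _), neg_add_cancel, Real.rpow_zero]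
  exact hS.to_subtype.not_finite
    (Set.finite_univ_iff.mp (Set.Finite.of_summable_const one_pos hone))

theorem inSobolev_zero_mul_weightOn_range {p : (Fin n → ℤ) → ℂ} {e : ℕ → Fin n → ℤ}
    (he : Function.Injective e) {s : ℝ}
    (hsum : Summable fun j => ‖p (e j)‖ ^ 2 * (1 + l2normSq (e j)) ^ (2 * s)) :
    InSobolev 0 fun ξ => p ξ * weightOn (Set.range e) s ξ := by
  refine (he.summable_iff fun ξ hξ => ?_).mp (hsum.congr fun j => ?_)
  · simp [weightOn_of_notMem hξ]
  · rw [Function.comp_apply, Real.rpow_zero, one_mul, norm_mul, mul_pow,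
      norm_weightOn_sq_of_mem (Set.mem_range_self j)]

theorem not_GHr_of_summable {m r : ℝ} {p : (Fin n → ℤ) → ℂ} {e : ℕ → Fin n → ℤ}
    (he : Function.Injective e)
    (hsum : Summable fun j => ‖p (e j)‖ ^ 2 * (1 + l2normSq (e j)) ^ (r - m)) :
    ¬ GHr m r p := by
  intro hGH
  have hs : 2 * ((r - m) / 2) = r - m := by ring
  have hu := hGH 0 _ (polyGrowth_weightOn _ _)
    (inSobolev_zero_mul_weightOn_range he (s := (r - m) / 2) (by rwa [hs]))
  refine not_inSobolev_weightOn (Set.infinite_range_of_injective he) ((r - m) / 2) ?_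
  rwa [hs, neg_sub, ← zero_add (m - r), ← add_sub_assoc]

end Counterexample

theorem stmt_1_general {n : ℕ} (m r' : ℝ)
    (p : (Fin n → ℤ) → ℂ)
    (K' : ℝ)
    (hinf : {ξ : Fin n → ℤ | ξ ≠ 0 ∧
        ‖p ξ‖ ≤ K' * l1norm ξ ^ (m - r')}.Infinite) :
    ∀ r : ℝ, 0 ≤ r → r < r' → ¬ GHr m r p := by
  intro r _ hr
  set C := K' ^ 2 * ((n : ℝ) + 2) ^ |m - r'|
  have hdecay : Tendsto (fun ξ : Fin n → ℤ => C * (1 + l2normSq ξ) ^ (-(r' - r)))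
      cofinite (𝓝 0) := by
    simpa using ((tendsto_rpow_neg_atTop (sub_pos.mpr hr)).comp
      (tendsto_atTop_add_const_left _ 1 tendsto_l2normSq_cofinite)).const_mul C
  obtain ⟨e, he, heS, hsum⟩ := hinf.exists_injective_summable_comp hdecay
  refine not_GHr_of_summable he (hsum.of_nonneg_of_le
    (fun j => mul_nonneg (sq_nonneg _) (Real.rpow_nonneg (one_add_l2normSq_pos _).le _))
    fun j => ?_)
  have hj := norm_sq_mul_rpow_le (heS j).1 (heS j).2 (r - m)
  rwa [show m - r' + (r - m) = -(r' - r) by ring] at hj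

theorem stmt_1 {n : ℕ} (hn : 1 ≤ n) (m r' : ℝ) (hr' : 0 < r')
    (p : (Fin n → ℤ) → ℂ) (hp : SymbolOrder m p)
    (K' : ℝ) (hK' : 0 < K')
    (hinf : {ξ : Fin n → ℤ | ξ ≠ 0 ∧
        ‖p ξ‖ ≤ K' * l1norm ξ ^ (m - r')}.Infinite) :
    ∀ r : ℝ, 0 ≤ r → r < r' → ¬ GHr m r p :=
  stmt_1_general m r' p K' hinf
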